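/- arXiv:1911.04184 — 4 statements merged into one kernel-verified Lean document; each statement's English description precedes it below -/
import Mathlib

section
/- Let C ⊆ ℝⁿ be a convex cone and A : ℝⁿ → ℝᵏ a linear map (1 ≤ k ≤ n−1). If the relative interior of C meets the kernel of A, then the image AC is a linear subspace of ℝᵏ, i.e. AC = lin(AC). -/
/-!
Since `C` is a cone, `A '' C` is a cone, and a cone is a subspace as soon as it is closed under
negation. Let `x ∈ relint C` with `A x = 0`, and let `v ∈ C`. Because `x` is a relative interior
point, moving slightly past `x` away from `v` stays in `C`: `x + t (x - v) ∈ C` for some `t > 0`.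
Its image under `A` is `-t A v`, so `-A v ∈ A '' C`.
-/

open Topology

namespace PointedCone

theorem coe_span_eq_of_neg_mem {R E : Type*} [Ring R] [LinearOrder R] [IsOrderedRing R]
    [AddCommGroup E] [Module R E] (K : PointedCone R E) (hK : ∀ x ∈ K, -x ∈ K) :
    (Submodule.span R (K : Set E) : Set E) = K := by
  have hlineal : Submodule.span R (K : Set E) ≤ K.lineal :=
    Submodule.span_le.2 fun x hx ↦ mem_lineal.2 ⟨hx, hK x hx⟩
  exact Set.Subset.antisymm (fun _ hx ↦ K.lineal_le (hlineal hx)) Submodule.subset_span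

end PointedCone

variable {V : Type*} [AddCommGroup V] [Module ℝ V] [TopologicalSpace V]
  [IsTopologicalAddGroup V] [ContinuousSMul ℝ V]

theorem exists_pos_add_smul_sub_mem_of_mem_intrinsicInterior {s : Set V} {x y : V}
    (hx : x ∈ intrinsicInterior ℝ s) (hy : y ∈ affineSpan ℝ s) :
    ∃ t > (0 : ℝ), x + t • (x - y) ∈ s := by
  obtain ⟨z, hz, rfl⟩ := mem_intrinsicInterior.1 hx
  have hline (t : ℝ) : (z : V) + t • ((z : V) - y) ∈ affineSpan ℝ s := by
    convert AffineMap.lineMap_mem (-t) z.2 hy using 1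
    simp only [AffineMap.lineMap_apply, vsub_eq_sub, vadd_eq_add]
    module
  let g : ℝ → affineSpan ℝ s := fun t ↦ ⟨_, hline t⟩
  have hg : Continuous g := by fun_prop
  have hg0 : g 0 = z := by simp [g]
  have hnear : ∀ᶠ t in 𝓝 (0 : ℝ), g t ∈ interior ((↑) ⁻¹' s) :=
    hg.continuousAt.eventually_mem (hg0 ▸ isOpen_interior.mem_nhds hz)
  have hright : ∀ᶠ t in 𝓝[>] (0 : ℝ), g t ∈ interior ((↑) ⁻¹' s) ∧ 0 < t :=
    (hnear.filter_mono nhdsWithin_le_nhds).and self_mem_nhdsWithin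
  obtain ⟨t, ht, htpos⟩ := hright.exists
  exact ⟨t, htpos, interior_subset (s := ((↑) : affineSpan ℝ s → V) ⁻¹' s) ht⟩

theorem PointedCone.neg_mem_map_of_mem_intrinsicInterior_of_map_eq_zero {W : Type*}
    [AddCommGroup W] [Module ℝ W] {K : PointedCone ℝ V} {f : V →ₗ[ℝ] W} {x : V}
    (hx : x ∈ intrinsicInterior ℝ (K : Set V)) (hfx : f x = 0) {y : W} (hy : y ∈ K.map f) :
    -y ∈ K.map f := by
  obtain ⟨v, hv, rfl⟩ := mem_map.1 hy
  obtain ⟨t, htpos, hmem⟩ :=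
    exists_pos_add_smul_sub_mem_of_mem_intrinsicInterior hx (subset_affineSpan ℝ _ hv)
  refine mem_map.2 ⟨t⁻¹ • (x + t • (x - v)), K.smul_mem (inv_nonneg.2 htpos.le) hmem, ?_⟩
  simp only [map_smul, map_add, map_sub, hfx, zero_sub, zero_add, smul_neg, smul_smul,
    inv_mul_cancel₀ htpos.ne', one_smul]

theorem stmt4_general (n k : ℕ)
    (C : Set (EuclideanSpace ℝ (Fin n)))
    (hC : ∀ x ∈ C, ∀ y ∈ C, ∀ a b : ℝ, 0 ≤ a → 0 ≤ b → a • x + b • y ∈ C)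
    (A : EuclideanSpace ℝ (Fin n) →ₗ[ℝ] EuclideanSpace ℝ (Fin k))
    (h : (intrinsicInterior ℝ C ∩ (LinearMap.ker A : Set (EuclideanSpace ℝ (Fin n)))).Nonempty) :
    A '' C = (Submodule.span ℝ (A '' C) : Set (EuclideanSpace ℝ (Fin k))) := by
  obtain ⟨x, hxC, hxA⟩ := h
  let K : PointedCone ℝ (EuclideanSpace ℝ (Fin n)) :=
    .ofConeComb C ⟨x, intrinsicInterior_subset hxC⟩
      fun u hu v hv a ha b hb ↦ hC u hu v hv a b ha hb
  have hAC : A '' C = K.map A := (K.coe_map A).symm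
  rw [hAC, (K.map A).coe_span_eq_of_neg_mem fun _ ↦
    PointedCone.neg_mem_map_of_mem_intrinsicInterior_of_map_eq_zero hxC hxA]

theorem stmt4 (n k : ℕ) (hk1 : 1 ≤ k) (hkn : k ≤ n - 1)
    (C : Set (EuclideanSpace ℝ (Fin n))) (hne : C.Nonempty)
    (hC : ∀ x ∈ C, ∀ y ∈ C, ∀ a b : ℝ, 0 ≤ a → 0 ≤ b → a • x + b • y ∈ C)
    (A : EuclideanSpace ℝ (Fin n) →ₗ[ℝ] EuclideanSpace ℝ (Fin k))
    (h : (intrinsicInterior ℝ C ∩ (LinearMap.ker A : Set (EuclideanSpace ℝ (Fin n)))).Nonempty) :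
    A '' C = (Submodule.span ℝ (A '' C) : Set (EuclideanSpace ℝ (Fin k))) :=
  stmt4_general n k C hC A h
end

section
/- Let C ⊆ ℝⁿ be a convex cone and A : ℝⁿ → ℝᵏ a linear map (1 ≤ k ≤ n−1). If the image AC is a linear subspace of ℝᵏ, then the relative interior of C intersects the kernel of A. -/
/-!
Pick `x` in the relative interior of `C`. Since `A '' C` is a subspace, `-A x = A y` for some
`y ∈ C`, so the midpoint of `x` and `y` lies in the kernel of `A`; it also lies in the relative
interior, because a convex combination of a relative interior point of a convex set (with positive
weight) and any point of the set stays in the relative interior.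
-/

section IntrinsicInterior

variable {E : Type*} [AddCommGroup E] [Module ℝ E] [TopologicalSpace E]

theorem mem_intrinsicInterior_iff_exists_isOpen {s : Set E} {z : E} :
    z ∈ intrinsicInterior ℝ s ↔
      z ∈ affineSpan ℝ s ∧ ∃ U, IsOpen U ∧ z ∈ U ∧ U ∩ (affineSpan ℝ s : Set E) ⊆ s := by
  constructor
  · rintro ⟨y, hy, rfl⟩
    rw [mem_interior_iff_mem_nhds, nhds_subtype_eq_comap, Filter.mem_comap] at hy
    obtain ⟨U, hU, hUs⟩ := hy
    obtain ⟨V, hVU, hV, hyV⟩ := mem_nhds_iff.1 hU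
    exact ⟨y.2, V, hV, hyV, fun w ⟨hwV, hwS⟩ => hUs (show ((⟨w, hwS⟩ : affineSpan ℝ s) : E) ∈ U
      from hVU hwV)⟩
  · rintro ⟨hz, U, hU, hzU, hUs⟩
    refine ⟨⟨z, hz⟩, ?_, rfl⟩
    rw [mem_interior_iff_mem_nhds, nhds_subtype_eq_comap, Filter.mem_comap]
    exact ⟨U, hU.mem_nhds hzU, fun w hw => hUs ⟨hw, w.2⟩⟩

variable [IsTopologicalAddGroup E] [ContinuousConstSMul ℝ E]

theorem Convex.combo_intrinsicInterior_self_mem_intrinsicInterior {s : Set E} (hs : Convex ℝ s)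
    {x y : E} (hx : x ∈ intrinsicInterior ℝ s) (hy : y ∈ s) {a b : ℝ} (ha : 0 < a) (hb : 0 ≤ b)
    (hab : a + b = 1) : a • x + b • y ∈ intrinsicInterior ℝ s := by
  obtain ⟨-, U, hU, hxU, hUs⟩ := mem_intrinsicInterior_iff_exists_isOpen.1 hx
  obtain rfl : b = 1 - a := by linarith
  have hyS : y ∈ affineSpan ℝ s := subset_affineSpan ℝ s hy
  -- the homothety `g` with centre `y` and ratio `a⁻¹` preserves `affineSpan ℝ s` and sends the
  -- combination back to `x`, so `g ⁻¹' U` is the required neighbourhood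
  set g : E → E := fun w => a⁻¹ • (w - y) + y
  have hgz : g (a • x + (1 - a) • y) = x := by
    show a⁻¹ • (a • x + (1 - a) • y - y) + y = x
    rw [show a • x + (1 - a) • y - y = a • (x - y) by module, smul_smul, inv_mul_cancel₀ ha.ne',
      one_smul, sub_add_cancel]
  refine mem_intrinsicInterior_iff_exists_isOpen.2
    ⟨subset_affineSpan ℝ s (hs (intrinsicInterior_subset hx) hy ha.le hb hab), g ⁻¹' U,
      hU.preimage (by fun_prop), by simpa [hgz] using hxU, ?_⟩
  rintro w ⟨hwU, hwS⟩
  have hgw : g w ∈ s := hUs ⟨hwU, (affineSpan ℝ s).smul_vsub_vadd_mem a⁻¹ hwS hyS hyS⟩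
  have hw : w = a • g w + (1 - a) • y := by
    rw [smul_add, smul_smul, mul_inv_cancel₀ ha.ne', one_smul]
    module
  rw [hw]
  exact hs hgw hy ha.le hb hab

end IntrinsicInterior

theorem stmt5_general (n k : ℕ)
    (C : Set (EuclideanSpace ℝ (Fin n))) (h0 : (0 : EuclideanSpace ℝ (Fin n)) ∈ C)
    (hC : ∀ x ∈ C, ∀ y ∈ C, ∀ a b : ℝ, 0 ≤ a → 0 ≤ b → a • x + b • y ∈ C)
    (A : EuclideanSpace ℝ (Fin n) →ₗ[ℝ] EuclideanSpace ℝ (Fin k))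
    (h : A '' C = (Submodule.span ℝ (A '' C) : Set (EuclideanSpace ℝ (Fin k)))) :
    (intrinsicInterior ℝ C ∩ (LinearMap.ker A : Set (EuclideanSpace ℝ (Fin n)))).Nonempty := by
  have hconv : Convex ℝ C := fun x hx y hy a b ha hb _ => hC x hx y hy a b ha hb
  obtain ⟨x, hx⟩ := Set.Nonempty.intrinsicInterior hconv ⟨0, h0⟩
  have hneg : -A x ∈ A '' C := by
    rw [h]
    exact neg_mem (Submodule.subset_span ⟨x, intrinsicInterior_subset hx, rfl⟩)
  obtain ⟨y, hy, hAy⟩ := hneg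
  refine ⟨(1 / 2 : ℝ) • x + (1 / 2 : ℝ) • y,
    hconv.combo_intrinsicInterior_self_mem_intrinsicInterior hx hy (by norm_num) (by norm_num)
      (by norm_num), ?_⟩
  simp [hAy]

theorem stmt5 (n k : ℕ) (hk1 : 1 ≤ k) (hkn : k ≤ n - 1)
    (C : Set (EuclideanSpace ℝ (Fin n))) (h0 : (0 : EuclideanSpace ℝ (Fin n)) ∈ C)
    (hC : ∀ x ∈ C, ∀ y ∈ C, ∀ a b : ℝ, 0 ≤ a → 0 ≤ b → a • x + b • y ∈ C)
    (A : EuclideanSpace ℝ (Fin n) →ₗ[ℝ] EuclideanSpace ℝ (Fin k))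
    (h : A '' C = (Submodule.span ℝ (A '' C) : Set (EuclideanSpace ℝ (Fin k)))) :
    (intrinsicInterior ℝ C ∩ (LinearMap.ker A : Set (EuclideanSpace ℝ (Fin n)))).Nonempty :=
  stmt5_general n k C h0 hC A h
end

section
/- Let C ⊆ ℝⁿ be a convex cone with 0 ∈ C, and suppose the relative interiors of C and a linear subspace L ⊆ ℝⁿ do not intersect. Then there exists a linear hyperplane H (through the origin) that separates C and L properly, and moreover L ⊆ H. -/
/-!
Put `K = C + L`, a convex set containing `0`. If `0 ∈ ri K`, then for a point `x ∈ ri C` and a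
small `t > 0` we could write `-t • x = c + l` with `c ∈ C`, `l ∈ L`; the point
`(c + t • x) / (1 + t) = -l / (1 + t)` would then lie in `ri C ∩ L`. Hence `0 ∉ ri K`, and
separating `0` from `ri K` gives `u` with `⟪u, ·⟫ ≥ 0` on `K` and not identically zero there.
Being nonnegative on the subspace `L`, `⟪u, ·⟫` vanishes on `L`, so it is positive somewhere on `C`.
-/

open RealInnerProductSpace Pointwise Metric Set

section IntrinsicInterior

variable {E : Type*} [NormedAddCommGroup E] [NormedSpace ℝ E]

theorem mem_intrinsicInterior_iff_exists_ball {s : Set E} {x : E} :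
    x ∈ intrinsicInterior ℝ s ↔
      x ∈ affineSpan ℝ s ∧ ∃ ε > 0, ball x ε ∩ affineSpan ℝ s ⊆ s := by
  constructor
  · rintro ⟨y, hy, rfl⟩
    obtain ⟨ε, hε, hball⟩ := Metric.mem_nhds_iff.mp (mem_interior_iff_mem_nhds.mp hy)
    exact ⟨y.2, ε, hε, fun z ⟨hz, hzA⟩ =>
      hball (show (⟨z, hzA⟩ : affineSpan ℝ s) ∈ ball y ε from hz)⟩
  · rintro ⟨hxA, ε, hε, hball⟩
    exact ⟨⟨x, hxA⟩, mem_interior_iff_mem_nhds.mpr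
      (Metric.mem_nhds_iff.mpr ⟨ε, hε, fun z hz => hball ⟨hz, z.2⟩⟩), rfl⟩

theorem Submodule.intrinsicInterior_coe (L : Submodule ℝ E) :
    intrinsicInterior ℝ (L : Set E) = L := by
  refine Subset.antisymm intrinsicInterior_subset fun x hx => ?_
  refine mem_intrinsicInterior_iff_exists_ball.mpr ⟨subset_affineSpan ℝ _ hx, 1, one_pos, ?_⟩
  exact fun y ⟨_, hy⟩ => by simpa using affineSpan_subset_span hy

theorem Convex.combo_self_intrinsicInterior_mem_intrinsicInterior {s : Set E} (hs : Convex ℝ s)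
    {x y : E} (hx : x ∈ s) (hy : y ∈ intrinsicInterior ℝ s) {a b : ℝ} (ha : 0 ≤ a) (hb : 0 < b)
    (hab : a + b = 1) : a • x + b • y ∈ intrinsicInterior ℝ s := by
  obtain rfl := eq_sub_of_add_eq hab
  obtain ⟨hyA, ε, hε, hball⟩ := mem_intrinsicInterior_iff_exists_ball.mp hy
  have hxA : x ∈ affineSpan ℝ s := subset_affineSpan ℝ s hx
  have hline : ∀ (z : E) (t : ℝ), AffineMap.lineMap x z t = x + t • (z - x) := fun z t => by
    rw [AffineMap.lineMap_apply_module']; abel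
  have hcombo : (1 - b) • x + b • y = AffineMap.lineMap x y b := by
    rw [hline]; module
  refine mem_intrinsicInterior_iff_exists_ball.mpr
    ⟨hcombo ▸ AffineMap.lineMap_mem b hxA hyA, b * ε, by positivity, fun z ⟨hz, hzA⟩ => ?_⟩
  set w := AffineMap.lineMap x z b⁻¹ with hw
  have hwy : dist w y < ε := by
    rw [mem_ball, hcombo, hline, dist_eq_norm] at hz
    have hwy_eq : w - y = b⁻¹ • (z - (x + b • (y - x))) := by
      rw [hw, hline]; match_scalars <;> field_simp; ring
    rwa [dist_eq_norm, hwy_eq, norm_smul, Real.norm_of_nonneg (inv_nonneg.2 hb.le),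
      inv_mul_lt_iff₀ hb]
  have hws : w ∈ s := hball ⟨hwy, AffineMap.lineMap_mem _ hxA hzA⟩
  have hzw : z = (1 - b) • x + b • w := by rw [hw, hline]; match_scalars <;> field_simp; ring
  exact hzw ▸ hs hx hws ha hb.le hab

theorem Convex.zero_notMem_intrinsicInterior_add_submodule [FiniteDimensional ℝ E] {C : Set E}
    (hC : Convex ℝ C) {L : Submodule ℝ E} (hCL : Disjoint (intrinsicInterior ℝ C) (L : Set E)) :
    (0 : E) ∉ intrinsicInterior ℝ (C + (L : Set E)) := by
  intro h
  obtain ⟨h0A, ε, hε, hball⟩ := mem_intrinsicInterior_iff_exists_ball.mp h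
  obtain ⟨c₀, hc₀, -⟩ := intrinsicInterior_subset h
  obtain ⟨x, hx⟩ := Set.Nonempty.intrinsicInterior hC ⟨c₀, hc₀⟩
  have hxA : x ∈ affineSpan ℝ (C + (L : Set E)) :=
    subset_affineSpan ℝ _ ⟨x, intrinsicInterior_subset hx, 0, L.zero_mem, add_zero x⟩
  obtain ⟨t, ht, htx⟩ := exists_pos_mul_lt hε ‖x‖
  have hneg : -t • x ∈ C + (L : Set E) := by
    refine hball ⟨?_, ?_⟩
    · rw [mem_ball_zero_iff, norm_smul, Real.norm_of_nonpos (by linarith), neg_neg, mul_comm]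
      exact htx
    · simpa [AffineMap.lineMap_apply_module] using AffineMap.lineMap_mem (-t) h0A hxA
  obtain ⟨c, hc, l, hl, hcl⟩ := hneg
  have hmem : (1 + t)⁻¹ • c + (t * (1 + t)⁻¹) • x ∈ intrinsicInterior ℝ C :=
    hC.combo_self_intrinsicInterior_mem_intrinsicInterior hc hx (by positivity) (by positivity)
      (by field_simp)
  have hmemL : (1 + t)⁻¹ • c + (t * (1 + t)⁻¹) • x ∈ L := by
    have hcomb : (1 + t)⁻¹ • c + (t * (1 + t)⁻¹) • x = -(1 + t)⁻¹ • l := by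
      rw [eq_sub_of_add_eq hcl]; module
    exact hcomb ▸ L.smul_mem _ hl
  exact hCL.ne_of_mem hmem hmemL rfl

end IntrinsicInterior

section Separation

variable {E : Type*} [NormedAddCommGroup E] [InnerProductSpace ℝ E]

theorem LinearMap.le_ker_of_forall_nonneg (f : E →ₗ[ℝ] ℝ) {L : Submodule ℝ E}
    (h : ∀ x ∈ L, 0 ≤ f x) : L ≤ LinearMap.ker f := fun x hx =>
  le_antisymm (by simpa using h (-x) (L.neg_mem hx)) (h x hx)

theorem Submodule.add_orthogonal_inter_subset {N : Submodule ℝ E} {K : Set E} (hK : K ⊆ N) :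
    (K + (Nᗮ : Set E)) ∩ N ⊆ K := by
  rintro _ ⟨⟨k, hk, w, hw, rfl⟩, hkw⟩
  change k + w ∈ K
  have hwN : w ∈ N := by simpa using N.sub_mem hkw (hK hk)
  rwa [show k + w = k by rw [Submodule.disjoint_def.mp N.orthogonal_disjoint w hwN hw, add_zero]]

theorem affineSpan_add_orthogonal_span_eq_top [FiniteDimensional ℝ E] {K : Set E}
    (h0 : (0 : E) ∈ K) :
    affineSpan ℝ (K + ((Submodule.span ℝ K)ᗮ : Set E)) = ⊤ := by
  set N := Submodule.span ℝ K
  have h0D : (0 : E) ∈ K + (Nᗮ : Set E) := ⟨0, h0, 0, Nᗮ.zero_mem, add_zero 0⟩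
  have hspan : Submodule.span ℝ (K + (Nᗮ : Set E)) = ⊤ := by
    rw [eq_top_iff, ← N.sup_orthogonal_of_hasOrthogonalProjection, sup_le_iff]
    constructor
    · exact Submodule.span_mono (subset_add_left _ Nᗮ.zero_mem)
    · exact (Submodule.span_eq Nᗮ).symm.le.trans (Submodule.span_mono (subset_add_right _ h0))
  rw [← AffineSubspace.coe_eq_univ_iff, ← insert_eq_of_mem h0D, affineSpan_insert_zero, hspan,
    Submodule.top_coe]

theorem exists_inner_nonneg_of_zero_notMem_intrinsicInterior [FiniteDimensional ℝ E] {K : Set E}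
    (hK : Convex ℝ K) (h0 : (0 : E) ∈ K) (hK0 : (0 : E) ∉ intrinsicInterior ℝ K) :
    ∃ u : E, (∀ x ∈ K, 0 ≤ ⟪u, x⟫) ∧ ∃ x ∈ K, 0 < ⟪u, x⟫ := by
  set N := Submodule.span ℝ K
  -- thickening `K` by `Nᗮ` turns its intrinsic interior into a genuine interior
  set D := K + (Nᗮ : Set E)
  have hD : Convex ℝ D := hK.add Nᗮ.convex
  obtain ⟨z, hz⟩ : (interior D).Nonempty :=
    hD.interior_nonempty_iff_affineSpan_eq_top.mpr (affineSpan_add_orthogonal_span_eq_top h0)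
  have hD0 : (0 : E) ∉ interior D := by
    intro h
    obtain ⟨ε, hε, hball⟩ := Metric.mem_nhds_iff.mp (mem_interior_iff_mem_nhds.mp h)
    refine hK0 (mem_intrinsicInterior_iff_exists_ball.mpr ⟨subset_affineSpan ℝ K h0, ε, hε, ?_⟩)
    exact fun y ⟨hy, hyA⟩ => Submodule.add_orthogonal_inter_subset Submodule.subset_span
      ⟨hball hy, affineSpan_subset_span hyA⟩
  obtain ⟨f, hf⟩ := geometric_hahn_banach_point_open hD.interior isOpen_interior hD0
  rw [map_zero] at hf
  have hfD : ∀ x ∈ D, 0 ≤ f x := fun x hx =>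
    closure_minimal (fun y hy => (hf y hy).le) (isClosed_le continuous_const f.continuous)
      (hD.closure_interior_eq_closure_of_nonempty_interior ⟨z, hz⟩ ▸ subset_closure hx)
  have hfK : ∃ k ∈ K, f k ≠ 0 := by
    by_contra! hK
    have hN : N ≤ LinearMap.ker (f : E →ₗ[ℝ] ℝ) := Submodule.span_le.mpr hK
    have hNperp : Nᗮ ≤ LinearMap.ker (f : E →ₗ[ℝ] ℝ) :=
      LinearMap.le_ker_of_forall_nonneg _ fun w hw => hfD w (subset_add_right _ h0 hw)
    have hz0 : z ∈ N ⊔ Nᗮ := by rw [N.sup_orthogonal_of_hasOrthogonalProjection]; trivial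
    exact (hf z hz).ne' (sup_le hN hNperp hz0)
  obtain ⟨k, hk, hfk⟩ := hfK
  refine ⟨(InnerProductSpace.toDual ℝ E).symm f, fun x hx => ?_, k, hk, ?_⟩
  · rw [InnerProductSpace.toDual_symm_apply]; exact hfD x (subset_add_left _ Nᗮ.zero_mem hx)
  · rw [InnerProductSpace.toDual_symm_apply]
    exact (hfD k (subset_add_left _ Nᗮ.zero_mem hk)).lt_of_ne' hfk

end Separation

theorem stmt6 (n : ℕ) (C : Set (EuclideanSpace ℝ (Fin n)))
    (h0 : (0 : EuclideanSpace ℝ (Fin n)) ∈ C)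
    (hC : ∀ x ∈ C, ∀ y ∈ C, ∀ a b : ℝ, 0 ≤ a → 0 ≤ b → a • x + b • y ∈ C)
    (L : Submodule ℝ (EuclideanSpace ℝ (Fin n)))
    (hdisj : intrinsicInterior ℝ C ∩ intrinsicInterior ℝ (L : Set (EuclideanSpace ℝ (Fin n))) = ∅) :
    ∃ u : EuclideanSpace ℝ (Fin n), u ≠ 0 ∧
      (∀ x ∈ C, 0 ≤ (inner ℝ u x : ℝ)) ∧
      (∀ x ∈ (L : Set (EuclideanSpace ℝ (Fin n))), (inner ℝ u x : ℝ) ≤ 0) ∧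
      ¬ (C ∪ (L : Set (EuclideanSpace ℝ (Fin n))) ⊆ {x | (inner ℝ u x : ℝ) = 0}) ∧
      (L : Set (EuclideanSpace ℝ (Fin n))) ⊆ {x | (inner ℝ u x : ℝ) = 0} := by
  have hconv : Convex ℝ C := fun x hx y hy a b ha hb _ => hC x hx y hy a b ha hb
  have hCL : Disjoint (intrinsicInterior ℝ C) (L : Set (EuclideanSpace ℝ (Fin n))) := by
    rwa [Set.disjoint_iff_inter_eq_empty, ← L.intrinsicInterior_coe]
  obtain ⟨u, hu, _, ⟨c, hc, l, hl, rfl⟩, hucl⟩ :=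
    exists_inner_nonneg_of_zero_notMem_intrinsicInterior (hconv.add L.convex)
      ⟨0, h0, 0, L.zero_mem, add_zero 0⟩ (hconv.zero_notMem_intrinsicInterior_add_submodule hCL)
  have huL : ∀ x ∈ L, ⟪u, x⟫ = 0 :=
    LinearMap.le_ker_of_forall_nonneg (innerₛₗ ℝ u) fun x hx => hu x (subset_add_right _ h0 hx)
  have huc : 0 < ⟪u, c⟫ := by simpa [inner_add_right, huL l hl] using hucl
  refine ⟨u, ?_, fun x hx => hu x (subset_add_left _ L.zero_mem hx), fun x hx => (huL x hx).le,
    fun h => huc.ne' (h (Or.inl hc)), huL⟩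
  rintro rfl
  simp at huc
end

section
/- Let C ⊆ ℝⁿ be a closed convex cone and x ∈ ℝⁿ. The norm of the metric projection of x onto C equals the supremum of positive parts of inner products with unit vectors of C: |Π_C(x)| = sup{⟨x, z⟩₊ / |z| : z ∈ C, z ≠ 0}, where Π_C(x) = argmin{|x − y| : y ∈ C} and a₊ = max(a, 0). (If C = {0}, both sides are interpreted as 0.) -/
/-!
Writing `v = x - p`, minimality of `p` on the convex set `C` gives `⟪v, y - p⟫ ≤ 0` for all
`y ∈ C`. Testing with `y = 0`, `y = 2p` and `y = p + z` shows `⟪v, p⟫ = 0` and `⟪v, z⟫ ≤ 0`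
on `C`. Hence `⟪x, z⟫ = ⟪v, z⟫ + ⟪p, z⟫ ≤ ‖p‖ ‖z‖` for every `z ∈ C`, while `z = p` attains
the bound since `⟪x, p⟫ = ‖p‖²`. If `p = 0` all ratios vanish, and Lean's `sSup ∅ = 0` covers
`C = {0}`.
-/

open scoped InnerProductSpace

theorem Convex.real_inner_sub_le_zero_of_forall_dist_le {F : Type*} [NormedAddCommGroup F]
    [InnerProductSpace ℝ F] {K : Set F} (hK : Convex ℝ K) {x p : F} (hp : p ∈ K)
    (hmin : ∀ y ∈ K, dist x p ≤ dist x y) : ∀ y ∈ K, ⟪x - p, y - p⟫_ℝ ≤ 0 := by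
  have : Nonempty K := ⟨⟨p, hp⟩⟩
  refine (norm_eq_iInf_iff_real_inner_le_zero hK hp).1 (le_antisymm ?_ ?_)
  · exact le_ciInf fun w => by simpa only [dist_eq_norm] using hmin w w.2
  · exact ciInf_le (f := fun w : K => ‖x - w‖) ⟨0, by rintro _ ⟨w, rfl⟩; positivity⟩
      ⟨p, hp⟩

section ConeProjection

variable {F : Type*} [NormedAddCommGroup F] [InnerProductSpace ℝ F] {C : Set F}
  (hC : ∀ x ∈ C, ∀ y ∈ C, ∀ a b : ℝ, 0 ≤ a → 0 ≤ b → a • x + b • y ∈ C)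
include hC

theorem convex_of_forall_nonneg_smul_add_smul_mem : Convex ℝ C :=
  fun x hx y hy a b ha hb _ => hC x hx y hy a b ha hb

variable {x p : F} (hp : p ∈ C) (hmin : ∀ y ∈ C, dist x p ≤ dist x y)
include hp hmin

theorem real_inner_sub_proj_sub_proj_le_zero {y : F} (hy : y ∈ C) : ⟪x - p, y - p⟫_ℝ ≤ 0 :=
  (convex_of_forall_nonneg_smul_add_smul_mem hC).real_inner_sub_le_zero_of_forall_dist_le hp hmin
    y hy

theorem real_inner_sub_proj_le_zero {z : F} (hz : z ∈ C) : ⟪x - p, z⟫_ℝ ≤ 0 := by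
  have hpz : p + z ∈ C := by simpa using hC p hp z hz 1 1 zero_le_one zero_le_one
  simpa using real_inner_sub_proj_sub_proj_le_zero hC hp hmin hpz

theorem real_inner_sub_proj_self : ⟪x - p, p⟫_ℝ = 0 := by
  have h0 : (0 : F) ∈ C := by simpa using hC p hp p hp 0 0 le_rfl le_rfl
  have hvar := real_inner_sub_proj_sub_proj_le_zero hC hp hmin h0
  rw [zero_sub, inner_neg_right] at hvar
  exact le_antisymm (real_inner_sub_proj_le_zero hC hp hmin hp) (by linarith)

theorem real_inner_proj_eq_norm_sq : ⟪x, p⟫_ℝ = ‖p‖ ^ 2 := by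
  have h := real_inner_sub_proj_self hC hp hmin
  rw [inner_sub_left, real_inner_self_eq_norm_sq] at h
  linarith

theorem real_inner_le_norm_proj_mul_norm {z : F} (hz : z ∈ C) : ⟪x, z⟫_ℝ ≤ ‖p‖ * ‖z‖ := by
  have hsplit : ⟪x, z⟫_ℝ = ⟪x - p, z⟫_ℝ + ⟪p, z⟫_ℝ := by rw [inner_sub_left]; ring
  linarith [real_inner_sub_proj_le_zero hC hp hmin hz, real_inner_le_norm p z]

end ConeProjection

theorem stmt11_general (n : ℕ) (C : Set (EuclideanSpace ℝ (Fin n)))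
    (hC : ∀ x ∈ C, ∀ y ∈ C, ∀ a b : ℝ, 0 ≤ a → 0 ≤ b → a • x + b • y ∈ C)
    (x p : EuclideanSpace ℝ (Fin n)) (hp : p ∈ C)
    (hmin : ∀ y ∈ C, dist x p ≤ dist x y) :
    ‖p‖ = sSup {r : ℝ | ∃ z ∈ C, z ≠ 0 ∧ r = max (inner ℝ x z : ℝ) 0 / ‖z‖} := by
  set S := {r : ℝ | ∃ z ∈ C, z ≠ 0 ∧ r = max (inner ℝ x z : ℝ) 0 / ‖z‖}
  have hle : ∀ r ∈ S, r ≤ ‖p‖ := by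
    rintro _ ⟨z, hz, hz0, rfl⟩
    rw [div_le_iff₀ (norm_pos_iff.2 hz0)]
    exact max_le (real_inner_le_norm_proj_mul_norm hC hp hmin hz) (by positivity)
  refine le_antisymm ?_ (Real.sSup_le hle (norm_nonneg p))
  rcases eq_or_ne p 0 with rfl | hp0
  · rw [norm_zero]
    exact Real.sSup_nonneg (by rintro _ ⟨z, -, -, rfl⟩; positivity)
  · have hpS : ‖p‖ ∈ S := by
      refine ⟨p, hp, hp0, ?_⟩
      rw [real_inner_proj_eq_norm_sq hC hp hmin, max_eq_left (by positivity), sq,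
        mul_div_cancel_right₀ _ (norm_ne_zero_iff.2 hp0)]
    exact le_csSup ⟨‖p‖, hle⟩ hpS

theorem stmt11 (n : ℕ) (C : Set (EuclideanSpace ℝ (Fin n)))
    (h0 : (0 : EuclideanSpace ℝ (Fin n)) ∈ C) (hcl : IsClosed C)
    (hC : ∀ x ∈ C, ∀ y ∈ C, ∀ a b : ℝ, 0 ≤ a → 0 ≤ b → a • x + b • y ∈ C)
    (x p : EuclideanSpace ℝ (Fin n)) (hp : p ∈ C)
    (hmin : ∀ y ∈ C, dist x p ≤ dist x y) :
    ‖p‖ = sSup {r : ℝ | ∃ z ∈ C, z ≠ 0 ∧ r = max (inner ℝ x z : ℝ) 0 / ‖z‖} :=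
  stmt11_general n C hC x p hp hmin
end
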